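/- arXiv:physics/0601005 — 3 statements merged into one kernel-verified Lean document; each statement's English description precedes it below -/
import Mathlib

section
/- For every β > 0, ν < 0 and N ∈ ℕ, Z(β,N) = (exp(−ν·N)/(2π)) · ∫_{−π}^{π} exp(−i·N·α) · ∏_{i} (1 − exp(ν + i·α − β·λ i))⁻¹ dα, where the integrand is complex-valued and the product converges since Re(ν + iα − β·λ i) = ν − β·λ i < 0. -/
open Finset

noncomputable section

/-- The finite set of configurations: functions `M : Fin n → ℕ` with `∑ i, M i = N`. -/
def Omega (n N : ℕ) : Finset (Fin n → ℕ) := Finset.Nat.antidiagonalTuple n N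

/-- The energy `∑ i, (M i) · λ i` of a configuration. -/
def energy {n : ℕ} (lam : Fin n → ℝ) (M : Fin n → ℕ) : ℝ := ∑ i, (M i : ℝ) * lam i

/-- The partition function `Z(β, N) = ∑_{M ∈ Ω(N)} exp(−β ∑ i, (M i)·λ i)`. -/
def Zpart (n N : ℕ) (lam : Fin n → ℝ) (β : ℝ) : ℝ :=
  ∑ M ∈ Omega n N, Real.exp (-β * energy lam M)

/-! Expanding each factor `(1 - e^{ν + iα - βλᵢ})⁻¹` as a geometric series (its ratio has modulus
`e^{ν - βλᵢ} < 1`) turns the product into an absolutely convergent sum over all `M : Fin n → ℕ` of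
`e^{(ν + iα)|M| - βE(M)}`, where `|M| = ∑ i, M i`. Integrating term by term against `e^{-iNα}` over
`[-π, π]` kills every term with `|M| ≠ N`; the survivors are the configurations of `Ω(N)` and
contribute `2π e^{νN} Z(β, N)`. -/

open Complex
open scoped Real

theorem summable_norm_prod_and_hasSum_prod_tsum {R ι : Type*} [NormedCommRing R]
    [CompleteSpace R] {n : ℕ} (f : Fin n → ι → R) (hf : ∀ i, Summable fun k => ‖f i k‖) :
    (Summable fun M : Fin n → ι => ‖∏ i, f i (M i)‖) ∧
      HasSum (fun M : Fin n → ι => ∏ i, f i (M i)) (∏ i, ∑' k, f i k) := by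
  induction n with
  | zero => exact ⟨.of_finite, by simp⟩
  | succ n ih =>
    obtain ⟨ih_norm, ih_sum⟩ := ih (fun i => f i.succ) fun i => hf i.succ
    let e := Fin.consEquiv fun _ : Fin (n + 1) => ι
    have he : (fun M => ∏ i, f i (M i)) ∘ e =
        fun p => f 0 p.1 * ∏ i : Fin n, f i.succ (p.2 i) := by
      ext p; simp [e, Fin.prod_univ_succ]
    rw [← e.summable_iff, ← e.hasSum_iff, Fin.prod_univ_succ,
      show (fun M => ‖∏ i, f i (M i)‖) ∘ e = norm ∘ ((fun M => ∏ i, f i (M i)) ∘ e) from rfl, he]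
    have h_norm := (hf 0).mul_norm ih_norm
    have h_sum := (hf 0).of_norm.hasSum.mul ih_sum h_norm.of_norm
    exact ⟨h_norm, h_sum⟩

theorem hasSum_prod_pow_of_norm_lt_one {𝕜 : Type*} [NormedField 𝕜] [CompleteSpace 𝕜] {n : ℕ}
    {c : Fin n → 𝕜} (hc : ∀ i, ‖c i‖ < 1) :
    HasSum (fun M : Fin n → ℕ => ∏ i, c i ^ M i) (∏ i, (1 - c i)⁻¹) := by
  simpa only [tsum_geometric_of_norm_lt_one (hc _)] using
    (summable_norm_prod_and_hasSum_prod_tsum (fun i k => c i ^ k)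
      fun i => summable_norm_geometric_of_norm_lt_one (hc i)).2

theorem integral_exp_I_int_mul (k : ℤ) :
    ∫ α in -π..π, exp (I * k * α) = if k = 0 then (2 * π : ℂ) else 0 := by
  split_ifs with hk
  · simp [hk, two_mul]
  · have hc : I * k ≠ 0 := mul_ne_zero I_ne_zero (Int.cast_ne_zero.mpr hk)
    rw [integral_exp_mul_complex hc, div_eq_zero_iff, sub_eq_zero]
    left
    calc exp (I * k * π) = exp (I * k * ↑(-π) + k * (2 * π * I)) := by push_cast; ring_nf
      _ = exp (I * k * ↑(-π)) := by rw [exp_add, exp_int_mul_two_pi_mul_I, mul_one]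

theorem integral_exp_neg_mul_tsum_mul_exp_pow {κ : Type*} [Countable κ] {b : κ → ℂ}
    (hb : Summable fun M => ‖b M‖) (d : κ → ℕ) (N : ℕ) :
    ∫ α in -π..π, exp (-I * N * α) * ∑' M, b M * exp (I * α) ^ d M =
      2 * π * ∑' M, if d M = N then b M else 0 := by
  have hterm : ∀ M (α : ℝ), exp (-I * N * α) * (b M * exp (I * α) ^ d M) =
      b M * exp (I * ((d M - N : ℤ) : ℂ) * α) := fun M α => by
    rw [← exp_nat_mul, mul_left_comm, ← exp_add]; push_cast; ring_nf
  have hsum := intervalIntegral.hasSum_integral_of_dominated_convergence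
    (F := fun M α => b M * exp (I * ((d M - N : ℤ) : ℂ) * α)) (μ := MeasureTheory.volume)
    (a := -π) (b := π) (fun M _ => ‖b M‖)
    (fun M => (continuous_const.mul (by fun_prop)).aestronglyMeasurable)
    (fun M => .of_forall fun α _ => by simp [norm_exp])
    (.of_forall fun _ _ => hb) intervalIntegrable_const
    (.of_forall fun α _ => by
      simp_rw [← hterm]
      refine (Summable.hasSum ?_).mul_left _
      exact .of_norm_bounded hb fun M => by simp [norm_exp])
  rw [← hsum.tsum_eq, ← tsum_mul_left]
  refine tsum_congr fun M => ?_
  rw [intervalIntegral.integral_const_mul, integral_exp_I_int_mul]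
  simp only [sub_eq_zero, Nat.cast_inj]
  split_ifs <;> ring

theorem tsum_ite_eq_sum_Omega {E : Type*} [AddCommMonoid E] [TopologicalSpace E]
    {n : ℕ} (N : ℕ) (f : (Fin n → ℕ) → E) :
    ∑' M : Fin n → ℕ, (if ∑ i, M i = N then f M else 0) = ∑ M ∈ Omega n N, f M := by
  rw [tsum_eq_sum (s := Omega n N) fun M hM => if_neg (mt Nat.mem_antidiagonalTuple.2 hM)]
  exact sum_congr rfl fun M hM => if_pos (Nat.mem_antidiagonalTuple.1 hM)

theorem prod_exp_pow_of_mem_Omega {n N : ℕ} {M : Fin n → ℕ} (hM : M ∈ Omega n N)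
    (lam : Fin n → ℝ) (β ν : ℝ) :
    ∏ i, Real.exp (ν - β * lam i) ^ M i = Real.exp (ν * N) * Real.exp (-β * energy lam M) := by
  have hN : (N : ℝ) = ∑ i, (M i : ℝ) := by exact_mod_cast (Nat.mem_antidiagonalTuple.1 hM).symm
  rw [← Real.exp_add, energy, hN, mul_sum, mul_sum, ← sum_add_distrib, Real.exp_sum]
  exact prod_congr rfl fun i _ => by rw [← Real.exp_nat_mul]; ring_nf

/-- Fourier coefficient extraction formula (11):
`Z(β,N) = (e^{−νN}/2π) ∫_{−π}^{π} e^{−iNα} ∏_i (1 − e^{ν + iα − βλ_i})⁻¹ dα`. -/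
theorem Z_eq_fourier_integral (n : ℕ) (lam : Fin n → ℝ) (hlam : ∀ i, 0 ≤ lam i)
    (β ν : ℝ) (hβ : 0 < β) (hν : ν < 0) (N : ℕ) :
    (Zpart n N lam β : ℂ) =
      ((Real.exp (-ν * N) / (2 * Real.pi) : ℝ) : ℂ) *
        ∫ α in (-Real.pi)..Real.pi,
          Complex.exp (-Complex.I * (N : ℂ) * (α : ℂ)) *
            ∏ i, (1 - Complex.exp ((ν : ℂ) + Complex.I * (α : ℂ) - (β : ℂ) * (lam i : ℂ)))⁻¹ := by
  set r : Fin n → ℝ := fun i => Real.exp (ν - β * lam i)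
  have hr : ∀ i, ‖(r i : ℂ)‖ < 1 := fun i => by
    rw [norm_real, Real.norm_of_nonneg (Real.exp_nonneg _), Real.exp_lt_one_iff]
    nlinarith [hlam i]
  have hb := (summable_norm_prod_and_hasSum_prod_tsum (fun i k => (r i : ℂ) ^ k)
    fun i => summable_norm_geometric_of_norm_lt_one (hr i)).1
  have hexpand : ∀ α : ℝ, ∏ i, (1 - exp (ν + I * α - β * lam i))⁻¹ =
      ∑' M : Fin n → ℕ, (∏ i, (r i : ℂ) ^ M i) * exp (I * α) ^ ∑ i, M i := fun α => by
    have hc : ∀ i, exp (ν + I * α - β * lam i) = r i * exp (I * α) := fun i => by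
      rw [ofReal_exp, ← exp_add]; push_cast; ring_nf
    have hc1 : ∀ i, ‖(r i : ℂ) * exp (I * α)‖ < 1 := fun i => by
      simpa [norm_exp] using hr i
    simp_rw [hc, ← (hasSum_prod_pow_of_norm_lt_one hc1).tsum_eq, mul_pow, prod_mul_distrib,
      prod_pow_eq_pow_sum]
  have hZ : ∑ M ∈ Omega n N, ∏ i, (r i : ℂ) ^ M i =
      ((Real.exp (ν * N) * Zpart n N lam β : ℝ) : ℂ) := by
    rw [Zpart, mul_sum]
    push_cast
    exact sum_congr rfl fun M hM => by exact_mod_cast prod_exp_pow_of_mem_Omega hM lam β ν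
  simp_rw [hexpand]
  rw [integral_exp_neg_mul_tsum_mul_exp_pow hb, tsum_ite_eq_sum_Omega, hZ]
  have hnorm : Real.exp (-ν * N) / (2 * π) * (2 * π * (Real.exp (ν * N) * Zpart n N lam β)) =
      Zpart n N lam β := by
    rw [neg_mul, Real.exp_neg]
    field_simp
  exact_mod_cast hnorm.symm
end
end

section
/- Let 0 = n₀ < n₁ < ⋯ < n_k = n be a block decomposition, let t : Fin k → ℝ be arbitrary real numbers, let E ≥ 0, Δ ≥ 0, β > 0, ν < 0 and c > 0 with ν + c < 0. Then the number of configurations M with ∑ i, (M i)·λ i ≤ E and ∑_{l=1}^{k} |S_l(M) − t l| ≥ Δ is at most exp(β·E − ν·N − c·Δ) · ∏_{l=1}^{k} ( ζ_l(ν+c,β)·exp(−c· t l) + ζ_l(ν−c,β)·exp(c · t l) ). -/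
open Finset

noncomputable section

/-- Block `l` of the decomposition `0 = n₀ < n₁ < ⋯ < n_k = n`:
the indices `i` with `n_{l} ≤ i < n_{l+1}` (blocks indexed by `l : Fin k`). -/
def block (n k : ℕ) (nb : Fin (k + 1) → ℕ) (l : Fin k) : Finset (Fin n) :=
  Finset.univ.filter fun i => nb l.castSucc ≤ (i : ℕ) ∧ (i : ℕ) < nb l.succ

/-- `S_l(M)`: the number of elements of the configuration falling into block `l`. -/
def blockSum {n k : ℕ} (nb : Fin (k + 1) → ℕ) (M : Fin n → ℕ) (l : Fin k) : ℕ :=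
  ∑ i ∈ block n k nb l, M i

/-- `ζ_l(μ, β) = ∏_{i ∈ block l} (1 − exp(μ − β λ i))⁻¹`. -/
def zetaBlock {n k : ℕ} (lam : Fin n → ℝ) (nb : Fin (k + 1) → ℕ) (l : Fin k) (μ β : ℝ) : ℝ :=
  ∏ i ∈ block n k nb l, (1 - Real.exp (μ - β * lam i))⁻¹

/-! Exponential Chebyshev bound: every counted configuration has weight
`exp (β (E - energy M) + c (∑ l, |S_l(M) - t l| - Δ)) ≥ 1`, and `exp (ν N) = ∏ l, exp (ν S_l(M))`.
Bounding `exp (c |x|)` by `exp (c x) + exp (-c x)` and expanding the product over blocks gives `2 ^ k`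
sign patterns; for each pattern the weight factorises over sites into geometric series in
`exp (ν ± c - β λ i) < 1`, whose sums are at most the factors of `ζ_l (ν ± c, β)`. -/

theorem Fin.exists_castSucc_le_and_lt_succ {α : Type*} [LinearOrder α] {k : ℕ}
    (f : Fin (k + 1) → α) {x : α} (h0 : f 0 ≤ x) (hlast : x < f (Fin.last k)) :
    ∃ l : Fin k, f l.castSucc ≤ x ∧ x < f l.succ := by
  by_contra! h
  have hle : ∀ j, f j ≤ x := Fin.induction h0 fun l hl => h l hl
  exact (hle (Fin.last k)).not_gt hlast

theorem sum_prod_pow_le_prod_inv_one_sub {ι : Type*} [Fintype ι] (s : Finset (ι → ℕ))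
    {r : ι → ℝ} (hr0 : ∀ i, 0 ≤ r i) (hr1 : ∀ i, r i < 1) :
    ∑ M ∈ s, ∏ i, r i ^ M i ≤ ∏ i, (1 - r i)⁻¹ := by
  classical
  set K := s.sup fun M => ∑ i, M i
  have hbox : s ⊆ Fintype.piFinset fun _ => range (K + 1) := by
    intro M hM
    simp only [Fintype.mem_piFinset, mem_range, Nat.lt_succ_iff]
    exact fun i => (single_le_sum (fun _ _ => Nat.zero_le _) (mem_univ i)).trans
      (le_sup (f := fun M => ∑ i, M i) hM)
  calc ∑ M ∈ s, ∏ i, r i ^ M i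
      ≤ ∑ M ∈ Fintype.piFinset (fun _ => range (K + 1)), ∏ i, r i ^ M i :=
        sum_le_sum_of_subset_of_nonneg hbox fun M _ _ => prod_nonneg fun i _ => pow_nonneg (hr0 i) _
    _ = ∏ i, ∑ m ∈ range (K + 1), r i ^ m := (prod_univ_sum _ _).symm
    _ ≤ ∏ i, (1 - r i)⁻¹ := by
        refine prod_le_prod (fun i _ => sum_nonneg fun m _ => pow_nonneg (hr0 i) m) fun i _ => ?_
        have := geom_sum_Ico_le_of_lt_one (m := 0) (n := K + 1) (hr0 i) (hr1 i)
        rwa [← range_eq_Ico, pow_zero, one_div] at this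

theorem sum_prod_sum_le_prod_sum {α ι κ : Type*} [Fintype ι] [Fintype κ] (s : Finset α)
    (H : ι → κ → α → ℝ) (h w : ι → κ → ℝ) (hw : ∀ l j, 0 ≤ w l j)
    (hH : ∀ σ : ι → κ, ∑ M ∈ s, ∏ l, H l (σ l) M ≤ ∏ l, h l (σ l)) :
    ∑ M ∈ s, ∏ l, ∑ j, H l j M * w l j ≤ ∏ l, ∑ j, h l j * w l j := by
  classical
  simp_rw [Fintype.prod_sum, prod_mul_distrib]
  rw [sum_comm]
  refine sum_le_sum fun σ _ => ?_
  rw [← sum_mul]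
  exact mul_le_mul_of_nonneg_right (hH σ) (prod_nonneg fun l _ => hw l (σ l))

section Blocks

variable {n k : ℕ} {nb : Fin (k + 1) → ℕ}

theorem mem_block {l : Fin k} {i : Fin n} :
    i ∈ block n k nb l ↔ nb l.castSucc ≤ (i : ℕ) ∧ (i : ℕ) < nb l.succ := by
  simp [block]

theorem exists_mem_block (h0 : nb 0 = 0) (hlast : nb (Fin.last k) = n) (i : Fin n) :
    ∃ l, i ∈ block n k nb l := by
  simpa only [mem_block] using
    Fin.exists_castSucc_le_and_lt_succ nb (x := (i : ℕ)) (by simp [h0]) (by simp [hlast])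

theorem eq_of_mem_block_of_mem_block (hmono : Monotone nb) {i : Fin n} {l l' : Fin k}
    (h : i ∈ block n k nb l) (h' : i ∈ block n k nb l') : l = l' := by
  rw [mem_block] at h h'
  by_contra hne
  rcases lt_or_gt_of_ne hne with hlt | hlt <;>
    have := hmono (Fin.succ_le_castSucc_iff.2 hlt) <;> omega

theorem exists_blockIndex (hmono : Monotone nb) (h0 : nb 0 = 0) (hlast : nb (Fin.last k) = n) :
    ∃ L : Fin n → Fin k, ∀ i l, i ∈ block n k nb l ↔ L i = l := by
  choose L hL using exists_mem_block h0 hlast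
  exact ⟨L, fun i l => ⟨fun h => eq_of_mem_block_of_mem_block hmono (hL i) h, fun h => h ▸ hL i⟩⟩

@[to_additive]
theorem prod_block_eq_prod {G : Type*} [CommMonoid G] {L : Fin n → Fin k}
    (hL : ∀ i l, i ∈ block n k nb l ↔ L i = l) (f : Fin k → Fin n → G) :
    ∏ l, ∏ i ∈ block n k nb l, f l i = ∏ i, f (L i) i := by
  have hblock : ∀ l, block n k nb l = univ.filter fun i => L i = l := fun l => by
    ext i
    simp [hL]
  simp_rw [hblock]
  rw [← prod_fiberwise univ L fun i => f (L i) i]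
  exact prod_congr rfl fun l _ => prod_congr rfl fun i hi => by rw [(mem_filter.1 hi).2]

end Blocks

section Configurations

variable {n k : ℕ} {lam : Fin n → ℝ} {nb : Fin (k + 1) → ℕ}

variable (lam nb) in
def blockWeight (l : Fin k) (μ β : ℝ) (M : Fin n → ℕ) : ℝ :=
  ∏ i ∈ block n k nb l, Real.exp (μ - β * lam i) ^ M i

theorem blockWeight_eq_exp (l : Fin k) (μ β : ℝ) (M : Fin n → ℕ) :
    blockWeight lam nb l μ β M =
      Real.exp (μ * blockSum nb M l - β * ∑ i ∈ block n k nb l, M i * lam i) := by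
  rw [blockWeight, blockSum, Nat.cast_sum, mul_sum, mul_sum, ← sum_sub_distrib, Real.exp_sum]
  refine prod_congr rfl fun i _ => ?_
  rw [← Real.exp_nat_mul]
  ring_nf

theorem sum_prod_blockWeight_le (hlam : ∀ i, 0 ≤ lam i) (hmono : Monotone nb) (h0 : nb 0 = 0)
    (hlast : nb (Fin.last k) = n) {β : ℝ} (hβ : 0 ≤ β) {μ : Fin k → ℝ} (hμ : ∀ l, μ l < 0)
    (s : Finset (Fin n → ℕ)) :
    ∑ M ∈ s, ∏ l, blockWeight lam nb l (μ l) β M ≤ ∏ l, zetaBlock lam nb l (μ l) β := by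
  obtain ⟨L, hL⟩ := exists_blockIndex hmono h0 hlast
  simp only [blockWeight, zetaBlock, prod_block_eq_prod hL]
  refine sum_prod_pow_le_prod_inv_one_sub s (fun i => (Real.exp_pos _).le) fun i => ?_
  have := mul_nonneg hβ (hlam i)
  exact Real.exp_lt_one_iff.2 (by linarith [hμ (L i)])

theorem sum_bool_blockWeight_mul_exp (l : Fin k) (ν β c t : ℝ) (M : Fin n → ℕ) :
    ∑ j : Bool, blockWeight lam nb l (ν + if j then c else -c) β M *
        Real.exp (-(if j then c else -c) * t) =
      Real.exp (ν * blockSum nb M l - β * ∑ i ∈ block n k nb l, M i * lam i) *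
        (Real.exp (c * (blockSum nb M l - t)) + Real.exp (-(c * (blockSum nb M l - t)))) := by
  simp only [Fintype.sum_bool, if_true, Bool.false_eq_true, if_false, blockWeight_eq_exp,
    ← Real.exp_add, mul_add]
  congr 2 <;> ring

-- On `Omega n N` this is `exp (ν N - β energy M) * ∏ l, 2 cosh (c (S_l(M) - t l))`, written as a
-- product of sums of block weights so that expanding it separates the blocks.
variable (lam nb) in
def deviationWeight (t : Fin k → ℝ) (ν β c : ℝ) (M : Fin n → ℕ) : ℝ :=
  ∏ l, ∑ j : Bool, blockWeight lam nb l (ν + if j then c else -c) β M *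
    Real.exp (-(if j then c else -c) * t l)

theorem deviationWeight_nonneg (t : Fin k → ℝ) (ν β c : ℝ) (M : Fin n → ℕ) :
    0 ≤ deviationWeight lam nb t ν β c M :=
  prod_nonneg fun l _ => sum_nonneg fun j _ =>
    mul_nonneg (by rw [blockWeight_eq_exp]; positivity) (Real.exp_pos _).le

theorem exp_deviation_le_deviationWeight (hmono : Monotone nb) (h0 : nb 0 = 0)
    (hlast : nb (Fin.last k) = n) {N : ℕ} {M : Fin n → ℕ} (hM : ∑ i, M i = N) (t : Fin k → ℝ)
    {β ν c : ℝ} (hc : 0 ≤ c) :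
    Real.exp (ν * N - β * energy lam M + c * ∑ l, |(blockSum nb M l : ℝ) - t l|) ≤
      deviationWeight lam nb t ν β c M := by
  obtain ⟨L, hL⟩ := exists_blockIndex hmono h0 hlast
  have hN : (N : ℝ) = ∑ l, (blockSum nb M l : ℝ) := by
    rw [← hM]
    push_cast [blockSum]
    exact (sum_block_eq_sum hL fun _ i => (M i : ℝ)).symm
  have hE : energy lam M = ∑ l, ∑ i ∈ block n k nb l, M i * lam i :=
    (sum_block_eq_sum hL fun _ i => (M i : ℝ) * lam i).symm
  simp_rw [deviationWeight, sum_bool_blockWeight_mul_exp]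
  calc _ = ∏ l, Real.exp (ν * blockSum nb M l - β * ∑ i ∈ block n k nb l, M i * lam i) *
          Real.exp |c * (blockSum nb M l - t l)| := by
        simp_rw [← Real.exp_add, ← Real.exp_sum, abs_mul, abs_of_nonneg hc, hN, hE, mul_sum,
          sum_add_distrib, sum_sub_distrib]
    _ ≤ _ := by
        gcongr with l
        exact Real.exp_abs_le _

theorem sum_deviationWeight_le (hlam : ∀ i, 0 ≤ lam i) (hmono : Monotone nb) (h0 : nb 0 = 0)
    (hlast : nb (Fin.last k) = n) (t : Fin k → ℝ) {β ν c : ℝ} (hβ : 0 ≤ β) (hc : 0 ≤ c)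
    (hνc : ν + c < 0) (s : Finset (Fin n → ℕ)) :
    ∑ M ∈ s, deviationWeight lam nb t ν β c M ≤
      ∏ l, (zetaBlock lam nb l (ν + c) β * Real.exp (-c * t l) +
        zetaBlock lam nb l (ν - c) β * Real.exp (c * t l)) := by
  have hζ : ∑ M ∈ s, deviationWeight lam nb t ν β c M ≤ ∏ l, ∑ j : Bool,
      zetaBlock lam nb l (ν + if j then c else -c) β * Real.exp (-(if j then c else -c) * t l) :=
    sum_prod_sum_le_prod_sum _ _ _ _ (fun _ _ => (Real.exp_pos _).le) fun σ =>
      sum_prod_blockWeight_le hlam hmono h0 hlast hβ (fun l => by split_ifs <;> linarith) s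
  simpa [Fintype.sum_bool, ← sub_eq_add_neg] using hζ

end Configurations

theorem deviation_bound_general (n N k : ℕ) (lam : Fin n → ℝ) (hlam : ∀ i, 0 ≤ lam i)
    (nb : Fin (k + 1) → ℕ) (hmono : StrictMono nb) (h0 : nb 0 = 0) (hlast : nb (Fin.last k) = n)
    (t : Fin k → ℝ) (E Δ β ν c : ℝ) (hβ : 0 < β)
    (hc : 0 < c) (hνc : ν + c < 0) :
    ((((Omega n N).filter fun M =>
        energy lam M ≤ E ∧ Δ ≤ ∑ l, |(blockSum nb M l : ℝ) - t l|).card : ℕ) : ℝ)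
      ≤ Real.exp (β * E - ν * N - c * Δ) *
          ∏ l, (zetaBlock lam nb l (ν + c) β * Real.exp (-c * t l) +
                zetaBlock lam nb l (ν - c) β * Real.exp (c * t l)) := by
  set S := (Omega n N).filter fun M =>
    energy lam M ≤ E ∧ Δ ≤ ∑ l, |(blockSum nb M l : ℝ) - t l|
  set K := Real.exp (β * E - ν * N - c * Δ)
  set W := deviationWeight lam nb t ν β c
  have hone : ∀ M ∈ S, 1 ≤ K * W M := by
    intro M hM
    rw [mem_filter, Omega, Nat.mem_antidiagonalTuple] at hM
    obtain ⟨hMN, hME, hMΔ⟩ := hM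
    calc 1 = K * Real.exp (ν * N - β * E + c * Δ) := by
          rw [← Real.exp_add, (Real.exp_eq_one_iff _).2 (by ring)]
      _ ≤ K * Real.exp (ν * N - β * energy lam M + c * ∑ l, |(blockSum nb M l : ℝ) - t l|) := by
          gcongr
      _ ≤ K * W M := by
          gcongr
          exact exp_deviation_le_deviationWeight hmono.monotone h0 hlast hMN t hc.le
  calc (S.card : ℝ) ≤ ∑ M ∈ S, K * W M := by simpa using card_nsmul_le_sum _ _ _ hone
    _ ≤ K * ∑ M ∈ Omega n N, W M := by
        rw [mul_sum]
        exact sum_le_sum_of_subset_of_nonneg (filter_subset _ _) fun M _ _ =>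
          mul_nonneg (Real.exp_pos _).le (deviationWeight_nonneg t ν β c M)
    _ ≤ _ := by
        gcongr
        exact sum_deviationWeight_le hlam hmono.monotone h0 hlast t hβ.le hc.le hνc _

/-- Deviation bound (16) of the paper, with arbitrary centering constants `t l`. -/
theorem deviation_bound (n N k : ℕ) (hk : 1 ≤ k) (lam : Fin n → ℝ) (hlam : ∀ i, 0 ≤ lam i)
    (nb : Fin (k + 1) → ℕ) (hmono : StrictMono nb) (h0 : nb 0 = 0) (hlast : nb (Fin.last k) = n)
    (t : Fin k → ℝ) (E Δ β ν c : ℝ) (hE : 0 ≤ E) (hΔ : 0 ≤ Δ) (hβ : 0 < β) (hν : ν < 0)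
    (hc : 0 < c) (hνc : ν + c < 0) :
    ((((Omega n N).filter fun M =>
        energy lam M ≤ E ∧ Δ ≤ ∑ l, |(blockSum nb M l : ℝ) - t l|).card : ℕ) : ℝ)
      ≤ Real.exp (β * E - ν * N - c * Δ) *
          ∏ l, (zetaBlock lam nb l (ν + c) β * Real.exp (-c * t l) +
                zetaBlock lam nb l (ν - c) β * Real.exp (c * t l)) :=
  deviation_bound_general n N k lam hlam nb hmono h0 hlast t E Δ β ν c hβ hc hνc
end
end

section
/- Let ω : Fin k → ℝ with ω i > 0 for all i, and for λ > 0 let N(λ) be the number of tuples m : Fin k → ℕ with ∑ i, (ω i)·(2·(m i) + 1) ≤ λ (the number of eigenvalues of the k-dimensional harmonic oscillator not exceeding λ). Then log N(λ) / log λ tends to k as λ → ∞. -/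
/-!
The admissible tuples are squeezed between two lattice boxes: every coordinate satisfies
`m i ≤ λ / (2 ω i)`, while every tuple whose coordinates are at most `(λ / c - 1) / 2` is
admissible as soon as `∑ ω ≤ c`. Hence `N(λ)` lies between two products of `k` affine functions
of `λ` with positive slopes, and the logarithm of each such product is `k log λ + o(log λ)`.
-/

open Filter Topology Real

section LatticeBox

variable {ι : Type*} [Fintype ι]

theorem ncard_Iic_pi (n : ι → ℕ) : (Set.Iic n).ncard = ∏ i, (n i + 1) := by
  classical
  rw [← Finset.coe_Iic, Set.ncard_coe_finset, Pi.card_Iic]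
  simp only [Nat.card_Iic]

theorem natCard_le_prod_of_subset_Iic {s : Set (ι → ℕ)} {n : ι → ℕ} (h : s ⊆ Set.Iic n) :
    Nat.card s ≤ ∏ i, (n i + 1) := by
  classical
  rw [Nat.card_coe_set_eq, ← ncard_Iic_pi]
  exact Set.ncard_le_ncard h (Set.finite_Iic n)

theorem prod_le_natCard_of_Iic_subset {s : Set (ι → ℕ)} {n : ι → ℕ} (hs : s.Finite)
    (h : Set.Iic n ⊆ s) : ∏ i, (n i + 1) ≤ Nat.card s := by
  classical
  rw [Nat.card_coe_set_eq, ← ncard_Iic_pi]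
  exact Set.ncard_le_ncard h hs

end LatticeBox

theorem tendsto_log_affine_div_log {a : ℝ} (ha : 0 < a) (b : ℝ) :
    Tendsto (fun x => log (a * x + b) / log x) atTop (𝓝 1) := by
  have hsmall : Tendsto (fun x => (log a + (log (x + b / a) - log x)) / log x) atTop (𝓝 0) :=
    (tendsto_const_nhds.add (tendsto_log_comp_add_sub_log (b / a))).div_atTop tendsto_log_atTop
  have hone := hsmall.const_add 1
  rw [add_zero] at hone
  refine hone.congr' ?_
  filter_upwards [eventually_gt_atTop 1, eventually_gt_atTop (-(b / a))] with x hx hxb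
  have hlog : log x ≠ 0 := (log_pos hx).ne'
  have hsplit : a * x + b = a * (x + b / a) := by field_simp
  rw [hsplit, log_mul ha.ne' (by linarith)]
  field_simp
  ring

theorem tendsto_log_prod_affine_div_log {ι : Type*} [Fintype ι] {a : ι → ℝ} (ha : ∀ i, 0 < a i)
    (b : ι → ℝ) :
    Tendsto (fun x => log (∏ i, (a i * x + b i)) / log x) atTop (𝓝 (Fintype.card ι)) := by
  have hsum : Tendsto (fun x => ∑ i, log (a i * x + b i) / log x) atTop (𝓝 (Fintype.card ι)) := by
    simpa using tendsto_finsetSum Finset.univ fun i _ => tendsto_log_affine_div_log (ha i) (b i)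
  refine hsum.congr' ?_
  have hpos : ∀ᶠ x in atTop, ∀ i, 0 < a i * x + b i := by
    refine eventually_all.2 fun i => ?_
    exact (tendsto_id.const_mul_atTop (ha i)).atTop_add tendsto_const_nhds |>.eventually_gt_atTop 0
  filter_upwards [hpos] with x hx
  rw [log_prod fun i _ => (hx i).ne', Finset.sum_div]

theorem tendsto_log_div_log_of_prod_affine_bounds {ι : Type*} [Fintype ι] {f : ℝ → ℝ}
    {a c : ι → ℝ} (ha : ∀ i, 0 < a i) (hc : ∀ i, 0 < c i) (b d : ι → ℝ)
    (hlower : ∀ᶠ x in atTop, ∏ i, (a i * x + b i) ≤ f x)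
    (hupper : ∀ᶠ x in atTop, f x ≤ ∏ i, (c i * x + d i)) :
    Tendsto (fun x => log (f x) / log x) atTop (𝓝 (Fintype.card ι)) := by
  have hpos : ∀ᶠ x in atTop, 0 < ∏ i, (a i * x + b i) := by
    refine (eventually_all.2 fun i => ?_).mono fun x hx => Finset.prod_pos fun i _ => hx i
    exact (tendsto_id.const_mul_atTop (ha i)).atTop_add tendsto_const_nhds |>.eventually_gt_atTop 0
  refine tendsto_of_tendsto_of_tendsto_of_le_of_le'
    (tendsto_log_prod_affine_div_log ha b) (tendsto_log_prod_affine_div_log hc d) ?_ ?_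
  all_goals
    filter_upwards [hpos, hlower, hupper, eventually_gt_atTop 1] with x hx hfx hfx' hx1
    gcongr
    · exact (log_pos hx1).le
  · exact hx.trans_le hfx

section Oscillator

variable {ι : Type*} [Fintype ι]

def oscillatorModes (ω : ι → ℝ) (lam : ℝ) : Set (ι → ℕ) :=
  {m | ∑ i, ω i * (2 * (m i : ℝ) + 1) ≤ lam}

variable {ω : ι → ℝ}

theorem oscillatorModes_subset_Iic (hω : ∀ i, 0 < ω i) (lam : ℝ) :
    oscillatorModes ω lam ⊆ Set.Iic fun i => ⌊lam / (2 * ω i)⌋₊ := by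
  intro m hm i
  have hterm : ω i * (2 * (m i : ℝ) + 1) ≤ lam :=
    (Finset.single_le_sum (f := fun j => ω j * (2 * (m j : ℝ) + 1))
      (fun j _ => by have := hω j; positivity) (Finset.mem_univ i)).trans hm
  apply Nat.le_floor
  rw [le_div_iff₀ (by linarith [hω i])]
  nlinarith [hω i]

theorem oscillatorModes_finite (hω : ∀ i, 0 < ω i) (lam : ℝ) :
    (oscillatorModes ω lam).Finite := by
  classical
  exact (Set.finite_Iic _).subset (oscillatorModes_subset_Iic hω lam)

theorem Iic_const_subset_oscillatorModes (hω : ∀ i, 0 ≤ ω i) {lam : ℝ} {n : ℕ}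
    (h : (2 * n + 1) * ∑ i, ω i ≤ lam) : Set.Iic (fun _ => n) ⊆ oscillatorModes ω lam := by
  intro m hm
  refine le_trans ?_ h
  rw [Finset.mul_sum]
  refine Finset.sum_le_sum fun i _ => ?_
  have : (m i : ℝ) ≤ n := by exact_mod_cast hm i
  nlinarith [hω i]

theorem natCard_oscillatorModes_le (hω : ∀ i, 0 < ω i) {lam : ℝ} (hlam : 0 ≤ lam) :
    (Nat.card (oscillatorModes ω lam) : ℝ) ≤ ∏ i, ((2 * ω i)⁻¹ * lam + 1) := by
  calc (Nat.card (oscillatorModes ω lam) : ℝ)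
      ≤ ∏ i, ((⌊lam / (2 * ω i)⌋₊ : ℝ) + 1) := by
        exact_mod_cast natCard_le_prod_of_subset_Iic (oscillatorModes_subset_Iic hω lam)
    _ ≤ ∏ i, ((2 * ω i)⁻¹ * lam + 1) := by
        gcongr with i
        rw [inv_mul_eq_div]
        exact Nat.floor_le (div_nonneg hlam (by linarith [hω i]))

theorem le_natCard_oscillatorModes (hω : ∀ i, 0 < ω i) {c lam : ℝ} (hc : 0 < c)
    (hωc : ∑ i, ω i ≤ c) (hlam : c ≤ lam) :
    ∏ _i : ι, ((2 * c)⁻¹ * lam - 2⁻¹) ≤ Nat.card (oscillatorModes ω lam) := by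
  set t := (2 * c)⁻¹ * lam - 2⁻¹
  have ht : 0 ≤ t := by
    have : 1 ≤ c⁻¹ * lam := by rw [inv_mul_eq_div, one_le_div hc]; exact hlam
    simp only [t, mul_inv]; linarith
  have hbox : (2 * ⌊t⌋₊ + 1) * ∑ i, ω i ≤ lam :=
    calc (2 * ⌊t⌋₊ + 1) * ∑ i, ω i ≤ (2 * t + 1) * c := by
          gcongr
          · exact Finset.sum_nonneg fun i _ => (hω i).le
          · exact Nat.floor_le ht
      _ = lam := by simp only [t]; field_simp; ring
  calc ∏ _i : ι, t ≤ ∏ _i : ι, ((⌊t⌋₊ : ℝ) + 1) := by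
        gcongr; exact (Nat.lt_floor_add_one t).le
    _ ≤ Nat.card (oscillatorModes ω lam) := by
        exact_mod_cast prod_le_natCard_of_Iic_subset (oscillatorModes_finite hω lam)
          (Iic_const_subset_oscillatorModes (fun i => (hω i).le) hbox)

end Oscillator

/-- Example 1 of the paper: the `ln`-density of the spectrum of the `k`-dimensional
harmonic oscillator equals `k`.  Here `N(λ)` is the number of tuples `m : Fin k → ℕ`
with `∑ i, ω i · (2 m i + 1) ≤ λ`, and `log N(λ) / log λ → k` as `λ → ∞`. -/
theorem oscillator_density (k : ℕ) (ω : Fin k → ℝ) (hω : ∀ i, 0 < ω i) :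
    Tendsto
      (fun lam : ℝ =>
        Real.log (Nat.card {m : Fin k → ℕ // ∑ i, ω i * (2 * (m i : ℝ) + 1) ≤ lam}) /
          Real.log lam)
      atTop (nhds (k : ℝ)) := by
  -- The lower box uses `∑ ω + 1` rather than `∑ ω`, which vanishes for `k = 0`.
  have hc : 0 < ∑ i, ω i + 1 :=
    (Finset.sum_nonneg fun i _ => (hω i).le).trans_lt (lt_add_one _)
  have hdensity := tendsto_log_div_log_of_prod_affine_bounds
    (f := fun lam => Nat.card (oscillatorModes ω lam))
    (fun _ => inv_pos.2 (mul_pos two_pos hc)) (fun i => inv_pos.2 (mul_pos two_pos (hω i)))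
    (fun _ => -2⁻¹) (fun _ => 1)
    (by filter_upwards [eventually_ge_atTop (∑ i, ω i + 1)] with lam hlam
        simpa only [sub_eq_add_neg] using le_natCard_oscillatorModes hω hc (by linarith) hlam)
    (by filter_upwards [eventually_ge_atTop 0] with lam hlam
        exact natCard_oscillatorModes_le hω hlam)
  rw [Fintype.card_fin] at hdensity
  exact hdensity
end
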